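/- Pointwise limit of the regularized entropies: for every c ∈ ℝ, if c ≥ 0 then H_λ(c) converges, as λ → 1⁻, to H_1(c), where H_1(c) = c log c − c + 1 for 0 ≤ c ≤ 1 (with the convention 0·log 0 = 0) and H_1(c) = 0 for c ≥ 1; and if c < 0 then H_λ(c) → +∞ as λ → 1⁻. -/

import Mathlib

/-- The regularized entropy `H_λ` (for `λ ∈ [0,1)`). -/
noncomputable def Hlam (lam c : ℝ) : ℝ :=
  if c ≤ (1 - lam) / 2 then c * Real.log ((1 - lam) / (1 + lam)) + lam
  else if c ≤ (1 + lam) / 2 then c * Real.log (2 * c / (1 + lam)) - c + (1 + lam) / 2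
  else 0

/-- The deep-quench entropy `H_1`: `c log c - c + 1` on `[0,1]` (with `0 log 0 = 0`,
which holds by convention `Real.log 0 = 0`), and `0` for `c ≥ 1`. -/
noncomputable def Hone (c : ℝ) : ℝ :=
  if c ≤ 1 then c * Real.log c - c + 1 else 0

/-!
As `λ → 1⁻` the branch of `H_λ(c)` that applies is eventually fixed by `c`: the linear
branch for `c ≤ 0`, where `log ((1 - λ)/(1 + λ)) → -∞` drives `c < 0` to `+∞`; the zero
branch for `c ≥ 1`; and for `0 < c < 1` the middle branch on a whole neighbourhood of
`λ = 1`, where it is continuous with value `c log c - c + 1`.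
-/

open Filter Set Real Topology

section Branches

variable {lam c : ℝ}

lemma Hlam_of_le (h : c ≤ (1 - lam) / 2) :
    Hlam lam c = c * log ((1 - lam) / (1 + lam)) + lam :=
  if_pos h

lemma Hlam_of_mem_Ioc (h : c ∈ Ioc ((1 - lam) / 2) ((1 + lam) / 2)) :
    Hlam lam c = c * log (2 * c / (1 + lam)) - c + (1 + lam) / 2 := by
  rw [Hlam, if_neg h.1.not_ge, if_pos h.2]

lemma Hlam_of_lt (h : (1 + lam) / 2 < c) (hlam : 0 ≤ lam) : Hlam lam c = 0 := by
  rw [Hlam, if_neg (by linarith), if_neg h.not_ge]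

lemma Hlam_zero_right (hlam : lam ≤ 1) : Hlam lam 0 = lam := by
  rw [Hlam_of_le (by linarith), zero_mul, zero_add]

end Branches

lemma Hone_of_one_le {c : ℝ} (hc : 1 ≤ c) : Hone c = 0 := by
  rcases hc.eq_or_lt with rfl | hc
  · simp [Hone]
  · exact if_neg hc.not_ge

lemma tendsto_Hlam_zero_right : Tendsto (fun lam => Hlam lam 0) (𝓝[<] 1) (𝓝 (Hone 0)) := by
  have hone : Hone 0 = 1 := by simp [Hone]
  rw [hone]
  refine tendsto_nhdsWithin_of_tendsto_nhds tendsto_id |>.congr' ?_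
  filter_upwards [self_mem_nhdsWithin] with lam hlam
  exact (Hlam_zero_right (le_of_lt hlam)).symm

lemma tendsto_Hlam_of_mem_Ioo {c : ℝ} (hc : c ∈ Ioo 0 1) :
    Tendsto (fun lam => Hlam lam c) (𝓝 1) (𝓝 (Hone c)) := by
  obtain ⟨hc0, hc1⟩ := hc
  set middle := fun lam : ℝ => c * log (2 * c / (1 + lam)) - c + (1 + lam) / 2
  have hcont : ContinuousAt middle 1 := by fun_prop (disch := positivity)
  have hvalue : middle 1 = Hone c := by
    simp only [middle, Hone, if_pos hc1.le]
    norm_num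
  have hmiddle : ∀ᶠ lam in 𝓝 1, middle lam = Hlam lam c := by
    filter_upwards [eventually_gt_nhds (by linarith : 1 - 2 * c < 1),
      eventually_gt_nhds (by linarith : 2 * c - 1 < 1)] with lam hlo hhi
    exact (Hlam_of_mem_Ioc ⟨by linarith, by linarith⟩).symm
  exact hvalue ▸ hcont.tendsto.congr' hmiddle

lemma tendsto_Hlam_of_one_le {c : ℝ} (hc : 1 ≤ c) :
    Tendsto (fun lam => Hlam lam c) (𝓝[<] 1) (𝓝 (Hone c)) := by
  rw [Hone_of_one_le hc]
  refine tendsto_const_nhds.congr' ?_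
  filter_upwards [Ioo_mem_nhdsLT zero_lt_one] with lam hlam
  exact (Hlam_of_lt (by linarith [hlam.2]) hlam.1.le).symm

lemma tendsto_Hlam_of_nonneg {c : ℝ} (hc : 0 ≤ c) :
    Tendsto (fun lam => Hlam lam c) (𝓝[<] 1) (𝓝 (Hone c)) := by
  rcases hc.eq_or_lt with rfl | hc0
  · exact tendsto_Hlam_zero_right
  rcases lt_or_ge c 1 with hc1 | hc1
  · exact (tendsto_Hlam_of_mem_Ioo ⟨hc0, hc1⟩).mono_left nhdsWithin_le_nhds
  · exact tendsto_Hlam_of_one_le hc1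

lemma tendsto_log_one_sub_div_one_add :
    Tendsto (fun lam : ℝ => log ((1 - lam) / (1 + lam))) (𝓝[<] 1) atBot := by
  refine tendsto_log_nhdsGT_zero.comp (tendsto_nhdsWithin_of_tendsto_nhds_of_eventually_within _ ?_ ?_)
  · have hcont : ContinuousAt (fun lam : ℝ => (1 - lam) / (1 + lam)) 1 := by
      fun_prop (disch := norm_num)
    simpa using hcont.tendsto.mono_left nhdsWithin_le_nhds
  · filter_upwards [Ioo_mem_nhdsLT zero_lt_one] with lam hlam
    exact mem_Ioi.mpr (div_pos (by linarith [hlam.2]) (by linarith [hlam.1]))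

lemma tendsto_Hlam_of_neg {c : ℝ} (hc : c < 0) :
    Tendsto (fun lam => Hlam lam c) (𝓝[<] 1) atTop := by
  have hlinear : Tendsto (fun lam => c * log ((1 - lam) / (1 + lam)) + lam) (𝓝[<] 1) atTop :=
    (tendsto_log_one_sub_div_one_add.const_mul_atBot_of_neg hc).atTop_add
      (tendsto_nhdsWithin_of_tendsto_nhds tendsto_id)
  refine hlinear.congr' ?_
  filter_upwards [self_mem_nhdsWithin] with lam hlam
  exact (Hlam_of_le (by linarith [mem_Iio.mp hlam])).symm

/-- Pointwise limit of the regularized entropies as `λ → 1⁻`. -/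
theorem regularized_entropy_pointwise_limit (c : ℝ) :
    (0 ≤ c → Filter.Tendsto (fun lam => Hlam lam c)
      (nhdsWithin 1 (Set.Ico (0:ℝ) 1)) (nhds (Hone c))) ∧
    (c < 0 → Filter.Tendsto (fun lam => Hlam lam c)
      (nhdsWithin 1 (Set.Ico (0:ℝ) 1)) Filter.atTop) := by
  have hfilter : 𝓝[Ico (0 : ℝ) 1] 1 ≤ 𝓝[<] 1 := nhdsWithin_mono _ Ico_subset_Iio_self
  exact ⟨fun hc => (tendsto_Hlam_of_nonneg hc).mono_left hfilter,
    fun hc => (tendsto_Hlam_of_neg hc).mono_left hfilter⟩
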